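/- Let G = (V, E) be a finite undirected graph with valid schedule D (a DAG on V in which every edge of G has a directed path between its endpoints). For every directed path P in the level schedule D' built from the depth-coloring of D (vertices grouped by their depth in D, edges of G oriented from lower depth-class to higher depth-class), each consecutive pair of vertices on P is connected by a directed path in D; consequently the weighted latency of D' is at most the weighted latency of D for any weight function ℓ : V → ℕ+. -/

import Mathlib

/-- A (nonempty, simple) directed path in the digraph with edge relation `S`,
represented as a list of vertices. -/
def IsDipath {V : Type*} (S : V → V → Prop) (l : List V) : Prop :=
  l ≠ [] ∧ l.Nodup ∧ l.Chain' S

/-- The depth of a digraph: the maximum number of vertices on a directed path. -/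
noncomputable def depthD {V : Type*} (S : V → V → Prop) : ℕ :=
  sSup {n | ∃ l : List V, IsDipath S l ∧ l.length = n}

/-- The depth of a vertex: the maximum number of vertices on a directed path ending at `v`. -/
noncomputable def vdepth {V : Type*} (S : V → V → Prop) (v : V) : ℕ :=
  sSup {n | ∃ l : List V, IsDipath S l ∧ l.getLast? = some v ∧ l.length = n}

/-- The weighted depth (latency): the maximum over directed paths of the sum of
vertex weights along the path. -/
noncomputable def wdepth {V : Type*} (S : V → V → Prop) (len : V → ℕ+) : ℕ :=
  sSup {n | ∃ l : List V, IsDipath S l ∧ (l.map fun v => (len v : ℕ)).sum = n}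

/-- Acyclicity of a digraph (a DAG). -/
def Acyclic {V : Type*} (S : V → V → Prop) : Prop :=
  ∀ v : V, ¬ Relation.TransGen S v v

/-- A valid schedule for the conflict graph `G`: an acyclic digraph on the same
vertices such that every edge of `G` is connected by a directed path in some direction. -/
def ValidSchedule {V : Type*} (G : SimpleGraph V) (S : V → V → Prop) : Prop :=
  Acyclic S ∧ ∀ u v : V, G.Adj u v →
    Relation.TransGen S u v ∨ Relation.TransGen S v u

/-!
In a DAG the depth strictly increases along directed paths. Hence an edge of `G` oriented from
lower to higher depth cannot be connected by a path of `S` in the opposite direction, so validity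
of `S` supplies an `S`-path along it. Splicing these paths into a path of the level schedule gives
an `S`-path containing it as a sublist, whose weight is at least as large.
-/

open Relation List

section Chains

variable {V : Type*} {S : V → V → Prop}

theorem List.exists_isChain_cons_append_singleton_of_transGen {a b : V} (h : TransGen S a b) :
    ∃ mid : List V, (a :: mid ++ [b]).IsChain S := by
  induction h using TransGen.head_induction_on with
  | single h => exact ⟨[], isChain_pair.2 h⟩
  | head h _ ih =>
    obtain ⟨mid, hmid⟩ := ih
    exact ⟨_ :: mid, isChain_cons_cons.2 ⟨h, hmid⟩⟩

theorem List.exists_isChain_sublist_of_isChain_transGen :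
    ∀ {l : List V}, l.IsChain (TransGen S) →
      ∃ l', l'.IsChain S ∧ l <+ l' ∧ l'.head? = l.head? ∧ l'.getLast? = l.getLast?
  | [], _ => ⟨[], .nil, .refl _, rfl, rfl⟩
  | [a], _ => ⟨[a], .singleton a, .refl _, rfl, rfl⟩
  | a :: b :: t, h => by
    obtain ⟨hab, hbt⟩ := isChain_cons_cons.1 h
    obtain ⟨l', hl', hsub, hhead, hlast⟩ := exists_isChain_sublist_of_isChain_transGen hbt
    obtain ⟨r, rfl⟩ := head?_eq_some_iff.1 hhead
    obtain ⟨mid, hmid⟩ := exists_isChain_cons_append_singleton_of_transGen hab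
    refine ⟨a :: mid ++ b :: r, ?_, ?_, rfl, ?_⟩
    · simpa using hmid.append_overlap (l₃ := r) hl' (cons_ne_nil b [])
    · exact (hsub.trans (sublist_append_right mid _)).cons_cons a
    · rw [getLast?_cons_cons, ← hlast, getLast?_append_of_ne_nil _ (cons_ne_nil b r)]

theorem Acyclic.nodup_of_isChain (hS : Acyclic S) {l : List V} (h : l.IsChain S) : l.Nodup := by
  refine (h.imp fun _ _ => TransGen.single).pairwise.imp ?_
  rintro a _ hab rfl
  exact hS a hab

theorem Acyclic.isDipath_of_isChain (hS : Acyclic S) {l : List V} (hne : l ≠ [])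
    (h : l.IsChain S) : IsDipath S l :=
  ⟨hne, hS.nodup_of_isChain h, h⟩

end Chains

section Depth

variable {V : Type*} [Fintype V] {S : V → V → Prop}

theorem bddAbove_vdepth_set (v : V) :
    BddAbove {n | ∃ l : List V, IsDipath S l ∧ l.getLast? = some v ∧ l.length = n} :=
  ⟨Fintype.card V, fun _ ⟨_, hl, _, hn⟩ => hn ▸ hl.2.1.length_le_card⟩

theorem le_vdepth {l : List V} {v : V} (hl : IsDipath S l) (hlast : l.getLast? = some v) :
    l.length ≤ vdepth S v :=
  le_csSup (bddAbove_vdepth_set v) ⟨l, hl, hlast, rfl⟩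

theorem exists_isDipath_length_eq_vdepth (v : V) :
    ∃ l : List V, IsDipath S l ∧ l.getLast? = some v ∧ l.length = vdepth S v := by
  refine Nat.sSup_mem ?_ (bddAbove_vdepth_set v)
  exact ⟨1, [v], ⟨cons_ne_nil v [], nodup_singleton v, .singleton v⟩, rfl, rfl⟩

theorem le_wdepth (len : V → ℕ+) {l : List V} (hl : IsDipath S l) :
    (l.map fun v => (len v : ℕ)).sum ≤ wdepth S len := by
  classical
  refine le_csSup ⟨∑ v, (len v : ℕ), ?_⟩ ⟨l, hl, rfl⟩
  rintro _ ⟨m, hm, rfl⟩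
  rw [← sum_toFinset _ hm.2.1]
  exact Finset.sum_le_sum_of_subset (Finset.subset_univ _)

theorem vdepth_lt_vdepth_of_transGen (hS : Acyclic S) {u v : V} (h : TransGen S u v) :
    vdepth S u < vdepth S v := by
  obtain ⟨l, hl, hlast, hlen⟩ := exists_isDipath_length_eq_vdepth (S := S) u
  have hchain : (l ++ [v]).IsChain (TransGen S) :=
    (hl.2.2.imp fun _ _ => TransGen.single).append (.singleton v) fun x hx y hy => by
      rw [hlast, Option.mem_some_iff] at hx
      rw [head?_singleton, Option.mem_some_iff] at hy
      exact hx ▸ hy ▸ h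
  obtain ⟨l', hl', hsub, -, hlast'⟩ := exists_isChain_sublist_of_isChain_transGen hchain
  rw [getLast?_concat] at hlast'
  have hne : l' ≠ [] := by rintro rfl; simp at hlast'
  calc vdepth S u = l.length := hlen.symm
    _ < (l ++ [v]).length := by simp
    _ ≤ l'.length := hsub.length_le
    _ ≤ vdepth S v := le_vdepth (hS.isDipath_of_isChain hne hl') hlast'

theorem wdepth_le_wdepth_of_le_transGen (hS : Acyclic S) {R : V → V → Prop}
    (hRS : ∀ ⦃u v⦄, R u v → TransGen S u v) (len : V → ℕ+) :
    wdepth R len ≤ wdepth S len := by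
  refine csSup_le' ?_
  rintro _ ⟨l, hl, rfl⟩
  obtain ⟨l', hl', hsub, -⟩ := exists_isChain_sublist_of_isChain_transGen (hl.2.2.imp hRS)
  have hne : l' ≠ [] := fun h => hl.1 (sublist_nil.1 (h ▸ hsub))
  calc (l.map fun v => (len v : ℕ)).sum ≤ (l'.map fun v => (len v : ℕ)).sum :=
        (hsub.map _).sum_le_sum fun _ _ => Nat.zero_le _
    _ ≤ wdepth S len := le_wdepth len (hS.isDipath_of_isChain hne hl')

theorem ValidSchedule.transGen_of_adj_of_vdepth_lt {G : SimpleGraph V}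
    (hvalid : ValidSchedule G S) {u v : V} (hadj : G.Adj u v) (hlt : vdepth S u < vdepth S v) : TransGen S u v :=
  (hvalid.2 u v hadj).resolve_right fun hvu =>
    (vdepth_lt_vdepth_of_transGen hvalid.1 hvu).not_gt hlt

end Depth

theorem stmt6 {V : Type*} [Fintype V] (G : SimpleGraph V) (S : V → V → Prop)
    (hvalid : ValidSchedule G S) (len : V → ℕ+) :
    (∀ l : List V,
        IsDipath (fun u v => G.Adj u v ∧ vdepth S u < vdepth S v) l →
        l.Chain' (Relation.TransGen S)) ∧
    wdepth (fun u v => G.Adj u v ∧ vdepth S u < vdepth S v) len ≤ wdepth S len := by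
  have hlevel : ∀ ⦃u v⦄, G.Adj u v ∧ vdepth S u < vdepth S v → TransGen S u v :=
    fun _ _ h => hvalid.transGen_of_adj_of_vdepth_lt h.1 h.2
  exact ⟨fun l hl => hl.2.2.imp hlevel, wdepth_le_wdepth_of_le_transGen hvalid.1 hlevel len⟩
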